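/- Let G(f,g) = ‖f‖²‖g‖² - (f,g)² denote the Gram determinant of f, g in a real Hilbert space H, and let A be a bounded invertible operator on H with G(Af, Ag) ≥ c·G(f,g) for some c > 0. Define σ(t) = ‖A1_{[0,t]}‖ on H = L²([0,1]) and λ(s,t) = (A1_{[0,s]}, A1_{[0,t]})/(σ(s)σ(t)). Then for 0 < s < t ≤ 1, 1/(√(1-|λ(s,t)|) σ(s) σ(t)) ≤ √2/(√c √(s(t-s))). -/

import Mathlib

open MeasureTheory

/-!
The Gram determinant of `1_{[0,s]}, 1_{[0,t]}` is `s (t - s)`. For any two vectors with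
`x = ‖u‖‖v‖` and `p = ⟪u, v⟫`, Cauchy–Schwarz gives `|p| ≤ x`, hence
`G(u, v) = (x - |p|)(x + |p|) ≤ 2x(x - |p|) = 2(1 - |λ|)x²`. Applied to `u = A1_{[0,s]}`,
`v = A1_{[0,t]}` together with `c s(t - s) ≤ G(u, v)`, this is the claim after taking square roots.
-/

/-- Lebesgue measure restricted to `[0,1]`. -/
noncomputable def mu01 : Measure ℝ := volume.restrict (Set.Icc (0:ℝ) 1)

/-- The indicator function `1_{[0,t]}` as an element of `L²([0,1])`. -/
noncomputable def ind (t : ℝ) : Lp ℝ 2 mu01 :=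
  indicatorConstLp 2 (measurableSet_Icc (a := (0:ℝ)) (b := t))
    (by
      have : IsFiniteMeasure mu01 := by unfold mu01; infer_instance
      exact measure_ne_top mu01 _) (1 : ℝ)

section Gram

variable {E : Type*} [NormedAddCommGroup E] [InnerProductSpace ℝ E]

noncomputable def gramDet (u v : E) : ℝ := ‖u‖ ^ 2 * ‖v‖ ^ 2 - (inner ℝ u v : ℝ) ^ 2

theorem gramDet_le_two_mul_one_sub_abs_div (u v : E) :
    gramDet u v ≤
      2 * (1 - |(inner ℝ u v : ℝ) / (‖u‖ * ‖v‖)|) * (‖u‖ * ‖v‖) ^ 2 := by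
  set x := ‖u‖ * ‖v‖
  set p := (inner ℝ u v : ℝ)
  have hpx : |p| ≤ x := abs_real_inner_le_norm u v
  -- holds also for `x = 0`, where `p / x = 0`
  have hrhs : (1 - |p / x|) * x ^ 2 = x * (x - |p|) := by
    rcases eq_or_ne x 0 with hx | hx
    · simp [hx]
    · rw [abs_div, abs_of_nonneg ((abs_nonneg p).trans hpx)]
      field_simp
  have hgram : gramDet u v = (x - |p|) * (x + |p|) := by
    rw [gramDet, ← sq_abs p]
    ring
  rw [mul_assoc, hrhs, hgram]
  nlinarith [abs_nonneg p]

end Gram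

theorem mu01_Icc {u : ℝ} (hu1 : u ≤ 1) : mu01 (Set.Icc 0 u) = ENNReal.ofReal u := by
  rw [mu01, Measure.restrict_apply measurableSet_Icc, Set.Icc_inter_Icc]
  simp [min_eq_left hu1, Real.volume_Icc]

theorem norm_ind_sq {u : ℝ} (hu : 0 ≤ u) (hu1 : u ≤ 1) : ‖ind u‖ ^ 2 = u := by
  rw [ind, norm_indicatorConstLp (by norm_num) (by norm_num), Measure.real, mu01_Icc hu1,
    ENNReal.toReal_ofReal hu]
  norm_num
  rw [← Real.rpow_natCast _ 2, ← Real.rpow_mul hu]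
  norm_num

theorem inner_ind_of_le {u v : ℝ} (hu : 0 ≤ u) (huv : u ≤ v) (hv1 : v ≤ 1) :
    (inner ℝ (ind u) (ind v) : ℝ) = u := by
  have hv : ∀ᵐ x ∂mu01, x ∈ Set.Icc (0:ℝ) u → (ind v : ℝ → ℝ) x = 1 := by
    filter_upwards [indicatorConstLp_coeFn (p := 2) (μ := mu01) (c := (1:ℝ))
      (hs := measurableSet_Icc (a := (0:ℝ)) (b := v))] with x hx hxu
    rw [ind, hx, Set.indicator_of_mem (Set.mem_Icc.mpr ⟨hxu.1, hxu.2.trans huv⟩)]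
  unfold ind at hv ⊢
  rw [L2.inner_indicatorConstLp_one measurableSet_Icc, setIntegral_congr_ae measurableSet_Icc hv]
  simp [Measure.real, mu01_Icc (huv.trans hv1), ENNReal.toReal_ofReal hu]

theorem gramDet_ind {s t : ℝ} (hs : 0 ≤ s) (hst : s ≤ t) (ht : t ≤ 1) :
    gramDet (ind s) (ind t) = s * (t - s) := by
  rw [gramDet, norm_ind_sq hs (hst.trans ht), norm_ind_sq (hs.trans hst) ht,
    inner_ind_of_le hs hst ht]
  ring

theorem one_div_sqrt_mul_le_of_mul_le {c d y x : ℝ} (hc : 0 < c) (hd : 0 < d) (hx : 0 ≤ x)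
    (h : c * d ≤ 2 * y * x ^ 2) :
    1 / (Real.sqrt y * x) ≤ Real.sqrt 2 / (Real.sqrt c * Real.sqrt d) := by
  have hroot : Real.sqrt c * Real.sqrt d ≤ Real.sqrt 2 * (Real.sqrt y * x) := by
    rw [← Real.sqrt_mul hc.le, ← Real.sqrt_sq hx, ← Real.sqrt_mul' _ (sq_nonneg x),
      ← Real.sqrt_mul zero_le_two, ← mul_assoc]
    exact Real.sqrt_le_sqrt h
  calc 1 / (Real.sqrt y * x) = Real.sqrt 2 / (Real.sqrt 2 * (Real.sqrt y * x)) := by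
        rw [div_mul_cancel_left₀ (by positivity), one_div]
    _ ≤ Real.sqrt 2 / (Real.sqrt c * Real.sqrt d) :=
        div_le_div_of_nonneg_left (by positivity) (by positivity) hroot

theorem stmt13_general (A : Lp ℝ 2 mu01 →L[ℝ] Lp ℝ 2 mu01) (c : ℝ) (hc : 0 < c)
    (hG : ∀ f g : Lp ℝ 2 mu01,
      c * (‖f‖ ^ 2 * ‖g‖ ^ 2 - (inner ℝ f g : ℝ) ^ 2)
        ≤ ‖A f‖ ^ 2 * ‖A g‖ ^ 2 - (inner ℝ (A f) (A g) : ℝ) ^ 2)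
    (s t : ℝ) (hs : 0 < s) (hst : s < t) (ht : t ≤ 1) :
    1 / (Real.sqrt (1 - |(inner ℝ (A (ind s)) (A (ind t)) : ℝ) / (‖A (ind s)‖ * ‖A (ind t)‖)|)
          * (‖A (ind s)‖ * ‖A (ind t)‖))
      ≤ Real.sqrt 2 / (Real.sqrt c * Real.sqrt (s * (t - s))) := by
  have hgram : c * (s * (t - s)) ≤ gramDet (A (ind s)) (A (ind t)) := by
    rw [← gramDet_ind hs.le hst.le ht]
    exact hG (ind s) (ind t)
  exact one_div_sqrt_mul_le_of_mul_le hc (mul_pos hs (sub_pos.mpr hst)) (by positivity)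
    (hgram.trans (gramDet_le_two_mul_one_sub_abs_div _ _))

/-- If `A` is a bounded operator on `H = L²([0,1])` whose Gram determinants satisfy
`G(Af, Ag) ≥ c G(f,g)`, with `σ(t) = ‖A 1_{[0,t]}‖ > 0` on `(0,1]` and
`λ(s,t) = (A1_{[0,s]}, A1_{[0,t]})/(σ(s)σ(t))`, then for `0 < s < t ≤ 1`,
`1/(√(1-|λ|) σ(s) σ(t)) ≤ √2/(√c √(s(t-s)))`. -/
theorem stmt13 (A : Lp ℝ 2 mu01 →L[ℝ] Lp ℝ 2 mu01) (c : ℝ) (hc : 0 < c)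
    (hG : ∀ f g : Lp ℝ 2 mu01,
      c * (‖f‖ ^ 2 * ‖g‖ ^ 2 - (inner ℝ f g : ℝ) ^ 2)
        ≤ ‖A f‖ ^ 2 * ‖A g‖ ^ 2 - (inner ℝ (A f) (A g) : ℝ) ^ 2)
    (hσ : ∀ t ∈ Set.Ioc (0:ℝ) 1, 0 < ‖A (ind t)‖)
    (s t : ℝ) (hs : 0 < s) (hst : s < t) (ht : t ≤ 1) :
    1 / (Real.sqrt (1 - |(inner ℝ (A (ind s)) (A (ind t)) : ℝ) / (‖A (ind s)‖ * ‖A (ind t)‖)|)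
          * (‖A (ind s)‖ * ‖A (ind t)‖))
      ≤ Real.sqrt 2 / (Real.sqrt c * Real.sqrt (s * (t - s))) :=
  stmt13_general A c hc hG s t hs hst ht
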